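/- Let q ≥ 4 be a power of 2, let m ≥ 2 be an integer, n = q^m − 1, and let β be a primitive element of F_{q^m}. If q = 4, then the cyclic code of length 2n over F_4 with generator polynomial (x−1)^2 m_β(x)^2 m_{β^2}(x) m_{β^3}(x) has dimension 2(q^m − 1) − 4m − 2 and minimum distance exactly 6. If q > 4, then the cyclic code of length 2n over F_q with generator polynomial (x−1)^2 m_β(x)^2 m_{β^2}(x) m_{β^3}(x) m_{β^4}(x) has dimension 2(q^m − 1) − 5m − 2 and minimum distance exactly 6. -/

import Mathlib

open Polynomial IntermediateField

/-- The cyclic code of length `N` over the field `F` generated by the polynomial `g`.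
Codewords are identified with the representatives of degree `< N` of the elements of the
ideal generated by `g` in `F[x]/(x^N - 1)`; equivalently, a polynomial `c` of degree `< N`
is a codeword iff `c ∈ (g, x^N - 1)` as an ideal of `F[x]`. -/
noncomputable def cyclicCode (F : Type*) [Field F] (N : ℕ) (g : Polynomial F) :
    Submodule F (Polynomial F) :=
  Polynomial.degreeLT F N ⊓
    Submodule.restrictScalars F (Ideal.span ({g, Polynomial.X ^ N - 1} : Set (Polynomial F)))

/-- The minimum distance (equivalently, the minimum Hamming weight of a nonzero codeword,
a codeword being identified with its coefficient vector) of a linear code of polynomials. -/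
noncomputable def minDist {F : Type*} [Field F] (C : Submodule F (Polynomial F)) : ℕ :=
  sInf {w | ∃ c ∈ C, c ≠ 0 ∧ c.support.card = w}


/-- BCH bound: a nonzero polynomial of degree `< n` vanishing at `γ^0, …, γ^r` for a
primitive `n`-th root of unity `γ` has at least `r + 2` nonzero coefficients. -/
lemma bch_bound {F K : Type*} [Field F] [Field K] [Algebra F K]
    {n : ℕ} {γ : K} (hγ : IsPrimitiveRoot γ n) {p : F[X]} (hp : p ≠ 0)
    (hdeg : p.natDegree < n) {r : ℕ} (hroots : ∀ j ≤ r, aeval (γ ^ j) p = 0) :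
    r + 2 ≤ p.support.card := by
  by_contra hlt
  push_neg at hlt
  set w := p.support.card with hw
  have hw1 : 1 ≤ w := by
    have : p.support.Nonempty := Polynomial.nonempty_support_iff.mpr hp
    simpa [hw, Finset.card_pos] using this
  have hwr : w - 1 ≤ r := by omega
  set e : Fin w ≃ {x // x ∈ p.support} := p.support.equivFin.symm with he
  set f : Fin w → ℕ := fun k => (e k : ℕ) with hf
  have hfs : ∀ k, f k ∈ p.support := fun k => (e k).2
  have hfn : ∀ k, f k < n := fun k =>
    lt_of_le_of_lt (Polynomial.le_natDegree_of_mem_supp _ (hfs k)) hdeg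
  have hfinj : Function.Injective f := by
    intro a b hab
    exact e.injective (Subtype.ext hab)
  set v : Fin w → K := fun k => γ ^ f k with hv
  have hvinj : Function.Injective v := by
    intro a b hab
    exact hfinj (hγ.pow_inj (hfn a) (hfn b) hab)
  set x : Fin w → K := fun k => algebraMap F K (p.coeff (f k)) with hx
  have hxz : x = 0 := by
    apply Matrix.eq_zero_of_forall_pow_sum_mul_pow_eq_zero hvinj
    intro i
    have h0 : aeval (γ ^ (i : ℕ)) p = 0 := hroots _ (le_trans (by omega) hwr)
    rw [Polynomial.aeval_def, Polynomial.eval₂_eq_sum, Polynomial.sum_def] at h0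
    have hsum : ∑ j : Fin w, x j * v j ^ (i : ℕ)
        = ∑ a ∈ p.support, algebraMap F K (p.coeff a) * (γ ^ (i : ℕ)) ^ a := by
      calc ∑ j : Fin w, x j * v j ^ (i : ℕ)
          = ∑ j : Fin w, (fun s : {y // y ∈ p.support} =>
              algebraMap F K (p.coeff (s : ℕ)) * (γ ^ (i : ℕ)) ^ (s : ℕ)) (e j) := by
            apply Finset.sum_congr rfl
            intro k _
            simp only [hx, hv, hf]
            rw [← pow_mul, ← pow_mul, mul_comm (f k) (i : ℕ)]
        _ = ∑ s : {y // y ∈ p.support}, algebraMap F K (p.coeff (s : ℕ)) * (γ ^ (i : ℕ)) ^ (s : ℕ) := by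
            exact Equiv.sum_comp e (fun s : {y // y ∈ p.support} =>
              algebraMap F K (p.coeff (s : ℕ)) * (γ ^ (i : ℕ)) ^ (s : ℕ))
        _ = ∑ a ∈ p.support, algebraMap F K (p.coeff a) * (γ ^ (i : ℕ)) ^ a := by
            exact Finset.sum_coe_sort p.support (fun a => algebraMap F K (p.coeff a) * (γ ^ (i:ℕ)) ^ a)
    rw [hsum, h0]
  have : p.coeff (f ⟨0, hw1⟩) = 0 := by
    have := congrFun hxz ⟨0, hw1⟩
    simpa [hx, _root_.map_eq_zero] using this
  exact (Polynomial.mem_support_iff.mp (hfs ⟨0, hw1⟩)) this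


lemma support_add_X_pow_mul {F : Type*} [Field F] {n : ℕ} (a b : F[X])
    (ha : ∀ k ∈ a.support, k < n) :
    (a + X ^ n * b).support = a.support ∪ b.support.image (· + n) := by
  ext k
  have hco : (a + X ^ n * b).coeff k = a.coeff k + (if n ≤ k then b.coeff (k - n) else 0) := by
    rw [Polynomial.coeff_add, mul_comm, Polynomial.coeff_mul_X_pow']
  by_cases hk : k < n
  · have h1 : (a + X ^ n * b).coeff k = a.coeff k := by rw [hco, if_neg (by omega), add_zero]
    simp only [Polynomial.mem_support_iff, Finset.mem_union, Finset.mem_image, h1]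
    constructor
    · intro h; exact Or.inl h
    · rintro (h | ⟨j, hj, rfl⟩)
      · exact h
      · omega
  · have h0 : a.coeff k = 0 := by
      by_contra h
      exact hk (ha k (Polynomial.mem_support_iff.mpr h))
    have h1 : (a + X ^ n * b).coeff k = b.coeff (k - n) := by
      rw [hco, if_pos (by omega), h0, zero_add]
    simp only [Polynomial.mem_support_iff, Finset.mem_union, Finset.mem_image, h1]
    constructor
    · intro h
      exact Or.inr ⟨k - n, h, by omega⟩
    · rintro (h | ⟨j, hj, rfl⟩)
      · exact absurd h0 h
      · simpa using hj
lemma support_card_add_X_pow_mul {F : Type*} [Field F] {n : ℕ} (a b : F[X])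
    (ha : ∀ k ∈ a.support, k < n) :
    (a + X ^ n * b).support.card = a.support.card + b.support.card := by
  rw [support_add_X_pow_mul a b ha, Finset.card_union_of_disjoint, Finset.card_image_of_injective]
  · exact fun x y => by omega
  · rw [Finset.disjoint_left]
    rintro k hk hk2
    obtain ⟨j, _, rfl⟩ := Finset.mem_image.mp hk2
    exact absurd (ha _ hk) (by omega)

lemma cyclicCode_mem_iff {F : Type*} [Field F] {N : ℕ} {g : F[X]} (hdvd : g ∣ X ^ N - 1)
    {c : F[X]} : c ∈ cyclicCode F N g ↔ c.degree < N ∧ g ∣ c := by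
  have hspan : Ideal.span ({g, X ^ N - 1} : Set F[X]) = Ideal.span {g} := by
    apply le_antisymm
    · rw [Ideal.span_le]
      rintro y (rfl | rfl)
      · exact Ideal.subset_span rfl
      · simpa [Ideal.mem_span_singleton] using hdvd
    · exact Ideal.span_mono (by simp)
  unfold cyclicCode
  rw [Submodule.mem_inf]
  simp [hspan, Polynomial.mem_degreeLT, Ideal.mem_span_singleton]

lemma cyclicCode_eq_map {F : Type*} [Field F] {N : ℕ} {g : F[X]} (hg : g ≠ 0)
    (hdvd : g ∣ X ^ N - 1) :
    cyclicCode F N g =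
      Submodule.map (LinearMap.mulLeft F g) (Polynomial.degreeLT F (N - g.natDegree)) := by
  have hbot : ∀ k : ℕ, (⊥ : WithBot ℕ) < (k : WithBot ℕ) := fun k => by
    exact_mod_cast WithBot.bot_lt_coe k
  ext c
  rw [cyclicCode_mem_iff hdvd]
  constructor
  · rintro ⟨hdeg, d, rfl⟩
    refine ⟨d, ?_, rfl⟩
    rw [SetLike.mem_coe, Polynomial.mem_degreeLT]
    rcases eq_or_ne d 0 with rfl | hd0
    · rw [Polynomial.degree_zero]; exact hbot _
    · have hgd : g * d ≠ 0 := mul_ne_zero hg hd0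
      have h1 : (g * d).natDegree < N := (Polynomial.natDegree_lt_iff_degree_lt hgd).mpr hdeg
      rw [Polynomial.natDegree_mul hg hd0] at h1
      exact (Polynomial.natDegree_lt_iff_degree_lt hd0).mp (by omega)
  · rintro ⟨d, hd, rfl⟩
    rw [SetLike.mem_coe, Polynomial.mem_degreeLT] at hd
    simp only [LinearMap.mulLeft_apply]
    refine ⟨?_, Dvd.intro _ rfl⟩
    rcases eq_or_ne d 0 with rfl | hd0
    · rw [mul_zero, Polynomial.degree_zero]; exact hbot _
    · have h2 : d.natDegree < N - g.natDegree := (Polynomial.natDegree_lt_iff_degree_lt hd0).mpr hd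
      have hgd : g * d ≠ 0 := mul_ne_zero hg hd0
      apply (Polynomial.natDegree_lt_iff_degree_lt hgd).mp
      rw [Polynomial.natDegree_mul hg hd0]
      omega

lemma finrank_cyclicCode {F : Type*} [Field F] {N : ℕ} {g : F[X]} (hg : g ≠ 0)
    (hdvd : g ∣ X ^ N - 1) :
    Module.finrank F (cyclicCode F N g) = N - g.natDegree := by
  rw [cyclicCode_eq_map hg hdvd]
  have hinj : Function.Injective (LinearMap.mulLeft F g) := by
    intro a b hab
    simp only [LinearMap.mulLeft_apply] at hab
    exact mul_left_cancel₀ hg hab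
  rw [(Submodule.equivMapOfInjective _ hinj _).symm.finrank_eq]
  rw [(Polynomial.degreeLTEquiv F (N - g.natDegree)).finrank_eq]
  exact Module.finrank_fin_fun F


lemma charP_two_of_card {F : Type*} [Field F] [Fintype F] {q e : ℕ}
    (hq : Fintype.card F = q) (he : q = 2 ^ e) (h4 : 4 ≤ q) : CharP F 2 := by
  have h0 : (q : F) = 0 := by rw [← hq]; exact FiniteField.cast_card_eq_zero F
  have hdvd : ringChar F ∣ q := (CharP.cast_eq_zero_iff F (ringChar F) q).mp h0
  have hprime : (ringChar F).Prime := by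
    rcases CharP.char_is_prime_or_zero F (ringChar F) with h | h
    · exact h
    · rw [h] at hdvd
      omega
  have : ringChar F = 2 := by
    have h2 : ringChar F ∣ 2 := hprime.dvd_of_dvd_pow (he ▸ hdvd)
    exact (Nat.prime_dvd_prime_iff_eq hprime Nat.prime_two).mp h2
  exact this ▸ ringChar.charP F

lemma aeval_pow_card_eq_zero {F K : Type*} [Field F] [Fintype F] [Field K] [Fintype K]
    [Algebra F K] {e : ℕ} (hcard : Fintype.card F = 2 ^ e) [CharP K 2]
    (p : F[X]) (x : K) (hx : aeval x p = 0) : aeval (x ^ Fintype.card F) p = 0 := by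
  haveI : Fact (Nat.Prime 2) := ⟨Nat.prime_two⟩
  set φ := iterateFrobenius K 2 e with hφ
  have hφx : ∀ y : K, φ y = y ^ Fintype.card F := fun y => by
    rw [hφ, iterateFrobenius_def, hcard]
  have hcomp : φ.comp (algebraMap F K) = algebraMap F K := by
    ext a
    rw [RingHom.comp_apply, hφx, ← map_pow, FiniteField.pow_card]
  have : aeval (x ^ Fintype.card F) p = φ (aeval x p) := by
    rw [Polynomial.aeval_def, Polynomial.aeval_def, Polynomial.hom_eval₂, hcomp, hφx]
  rw [this, hx, map_zero]

lemma aeval_pow_card_pow_eq_zero {F K : Type*} [Field F] [Fintype F] [Field K] [Fintype K]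
    [Algebra F K] {e : ℕ} (hcard : Fintype.card F = 2 ^ e) [CharP K 2]
    (p : F[X]) (x : K) (hx : aeval x p = 0) (t : ℕ) :
    aeval (x ^ Fintype.card F ^ t) p = 0 := by
  induction t with
  | zero => simpa using hx
  | succ t ih =>
      have := aeval_pow_card_eq_zero hcard p (x ^ Fintype.card F ^ t) ih
      rwa [← pow_mul, ← pow_succ] at this

lemma finrank_eq_of_card {F K : Type*} [Field F] [Fintype F] [Field K] [Fintype K]
    [Algebra F K] {q m : ℕ} (hq : Fintype.card F = q) (h2 : 2 ≤ q)
    (hK : Fintype.card K = q ^ m) : Module.finrank F K = m := by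
  haveI : Module.Finite F K := Module.Finite.of_finite
  have := Module.card_eq_pow_finrank (K := F) (V := K)
  rw [hq, hK] at this
  exact (Nat.pow_right_injective h2 this.symm)

lemma minpoly_pow_natDegree {F K : Type*} [Field F] [Fintype F] [Field K] [Fintype K]
    [Algebra F K] {q m : ℕ} (hq : Fintype.card F = q) (hq4 : 4 ≤ q) (hm : 2 ≤ m)
    (hK : Fintype.card K = q ^ m) {β : K} (hβ : IsPrimitiveRoot β (q ^ m - 1))
    {i : ℕ} (hi1 : 1 ≤ i) (hi4 : i ≤ 4) :
    (minpoly F (β ^ i)).natDegree = m := by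
  haveI : Module.Finite F K := Module.Finite.of_finite
  set n := q ^ m - 1 with hn
  set x := β ^ i with hx
  have hint : IsIntegral F x := IsIntegral.of_finite F x
  set E := F⟮x⟯ with hE
  have hdeg : (minpoly F x).natDegree = Module.finrank F E :=
    (IntermediateField.adjoin.finrank hint).symm
  set d := Module.finrank F E with hd
  haveI : Fintype E := Fintype.ofFinite E
  have hcardE : Fintype.card E = q ^ d := by
    have := Module.card_eq_pow_finrank (K := F) (V := E)
    rw [hq] at this
    exact this
  -- basic arithmetic facts
  have hq2 : 2 ≤ q := by omega
  have hA1 : 1 ≤ q ^ (m - 1) := Nat.one_le_pow _ _ (by omega)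
  have h4A : 4 * q ^ (m - 1) ≤ q ^ m := by
    calc 4 * q ^ (m - 1) ≤ q * q ^ (m - 1) := Nat.mul_le_mul_right _ hq4
      _ = q ^ m := by rw [← pow_succ']; congr 1; omega
  have hqq : q ≤ q ^ (m - 1) := Nat.le_self_pow (by omega) q
  have hB16 : 16 ≤ q ^ m := by omega
  -- x ^ (q ^ d) = x
  have hxE : x ∈ E := IntermediateField.mem_adjoin_simple_self F x
  have hxpow : x ^ q ^ d = x := by
    have h1 : (⟨x, hxE⟩ : E) ^ Fintype.card E = ⟨x, hxE⟩ := FiniteField.pow_card _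
    have h2 := congrArg (Subtype.val) h1
    rw [SubmonoidClass.coe_pow] at h2
    rw [← hcardE]
    exact h2
  have hx0 : x ≠ 0 := pow_ne_zero _ (hβ.ne_zero (by omega))
  have hxpow1 : x ^ (q ^ d - 1) = 1 := by
    have hqd1 : 1 ≤ q ^ d := Nat.one_le_pow _ _ (by omega)
    have : x * x ^ (q ^ d - 1) = x * 1 := by
      rw [mul_one, ← pow_succ']
      rw [← hxpow]
      congr 1
      omega
    exact mul_left_cancel₀ hx0 this
  have hdvd : n ∣ i * (q ^ d - 1) := by
    rw [← hβ.pow_eq_one_iff_dvd, pow_mul]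
    exact hxpow1
  -- d ≤ m
  have hdm : d ≤ m := by
    have hcle : Fintype.card E ≤ Fintype.card K :=
      Fintype.card_le_of_injective _ Subtype.val_injective
    rw [hcardE, hK] at hcle
    exact (Nat.pow_le_pow_iff_right hq2).mp hcle
  have hd1 : 1 ≤ d := by
    by_contra h
    have hd0 : d = 0 := by omega
    rw [hd0, pow_zero] at hcardE
    have : 1 < Fintype.card E := Fintype.one_lt_card
    omega
  -- d = m
  have hdm' : d = m := by
    by_contra h
    have hdlt : d ≤ m - 1 := by omega
    have hle : q ^ d ≤ q ^ (m - 1) := Nat.pow_le_pow_right (by omega) hdlt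
    have hq4' : 4 ≤ q ^ d := le_trans hq4 (Nat.le_self_pow (by omega) q)
    have hXpos : 0 < i * (q ^ d - 1) := Nat.mul_pos (by omega) (by omega)
    have hXle : i * (q ^ d - 1) ≤ 4 * (q ^ (m - 1) - 1) :=
      Nat.mul_le_mul hi4 (by omega)
    have hnle := Nat.le_of_dvd hXpos hdvd
    omega
  exact hdeg.trans hdm'

lemma minpoly_pow_ne {F K : Type*} [Field F] [Fintype F] [Field K] [Fintype K]
    [Algebra F K] {q m e : ℕ} (hq : Fintype.card F = q) (he : q = 2 ^ e) (hq4 : 4 ≤ q)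
    (hm : 2 ≤ m) (hK : Fintype.card K = q ^ m) {β : K} (hβ : IsPrimitiveRoot β (q ^ m - 1))
    [CharP K 2] {i j : ℕ} (hi1 : 1 ≤ i) (hij : i < j) (hj4 : j ≤ 4)
    (hextra : 4 < q ∨ j ≤ 3) : minpoly F (β ^ i) ≠ minpoly F (β ^ j) := by
  classical
  intro hEq
  set n := q ^ m - 1 with hn
  have hq2 : 2 ≤ q := by omega
  have hA1 : 1 ≤ q ^ (m - 1) := Nat.one_le_pow _ _ (by omega)
  have h4A : 4 * q ^ (m - 1) ≤ q ^ m := by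
    calc 4 * q ^ (m - 1) ≤ q * q ^ (m - 1) := Nat.mul_le_mul_right _ hq4
      _ = q ^ m := by rw [← pow_succ']; congr 1; omega
  have hqq : q ≤ q ^ (m - 1) := Nat.le_self_pow (by omega) q
  have hB16 : 16 ≤ q ^ m := by omega
  have hn15 : 15 ≤ n := by omega
  -- the exponents i * q ^ t for t ≤ m - 1 are < n
  have hbnd : ∀ t, t ≤ m - 1 → i * q ^ t < n := by
    intro t ht
    have h1 : q ^ t ≤ q ^ (m - 1) := Nat.pow_le_pow_right (by omega) ht
    have h2 : i * q ^ t ≤ 3 * q ^ (m - 1) := by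
      apply Nat.mul_le_mul _ h1
      omega
    have h3 : 4 * q ^ (m - 1) ≥ 4 * q := Nat.mul_le_mul_left _ hqq
    omega
  have hint : IsIntegral F (β ^ i) := IsIntegral.of_finite F _
  set p := minpoly F (β ^ i) with hp
  have hp0 : p ≠ 0 := minpoly.ne_zero hint
  have hdegp : p.natDegree = m := minpoly_pow_natDegree hq hq4 hm hK hβ hi1 (by omega)
  set pm := p.map (algebraMap F K) with hpm
  have hinj : Function.Injective (algebraMap F K) := (algebraMap F K).injective
  set S : Finset K := (Finset.range m).image (fun t => β ^ (i * q ^ t)) with hS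
  have hinjOn : Set.InjOn (fun t => β ^ (i * q ^ t)) (Finset.range m) := by
    intro a ha b hb hab
    simp only [Finset.coe_range, Set.mem_Iio] at ha hb
    have h1 := hβ.pow_inj (hbnd a (by omega)) (hbnd b (by omega)) hab
    have h2 : q ^ a = q ^ b := Nat.eq_of_mul_eq_mul_left (by omega) h1
    exact Nat.pow_right_injective hq2 h2
  have hcardS : S.card = m := by
    rw [hS, Finset.card_image_of_injOn hinjOn, Finset.card_range]
  have hSsub : S ⊆ pm.roots.toFinset := by
    intro y hy
    rw [hS, Finset.mem_image] at hy
    obtain ⟨t, ht, rfl⟩ := hy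
    rw [Multiset.mem_toFinset, Polynomial.mem_roots_map_of_injective hinj hp0]
    have : aeval (β ^ (i * q ^ t)) p = 0 := by
      rw [pow_mul]
      have h5 := aeval_pow_card_pow_eq_zero (hq.trans he) p (β ^ i) (minpoly.aeval F _) t
      rwa [hq] at h5
    rwa [Polynomial.aeval_def] at this
  have hcardT : pm.roots.toFinset.card ≤ m := by
    calc pm.roots.toFinset.card ≤ Multiset.card pm.roots := Multiset.toFinset_card_le _
      _ ≤ pm.natDegree := Polynomial.card_roots' pm
      _ = m := by rw [hpm, Polynomial.natDegree_map, hdegp]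
  have hSeq : S = pm.roots.toFinset :=
    Finset.eq_of_subset_of_card_le hSsub (by omega)
  have hjroot : β ^ j ∈ pm.roots.toFinset := by
    rw [Multiset.mem_toFinset, Polynomial.mem_roots_map_of_injective hinj hp0,
      ← Polynomial.aeval_def, hEq]
    exact minpoly.aeval F _
  rw [← hSeq, hS, Finset.mem_image] at hjroot
  obtain ⟨t, ht, hjt⟩ := hjroot
  rw [Finset.mem_range] at ht
  have hjn : j < n := by omega
  have hiqt := hβ.pow_inj (hbnd t (by omega)) hjn hjt
  -- i * q ^ t = j : impossible
  rcases Nat.eq_zero_or_pos t with rfl | ht1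
  · simp at hiqt
    omega
  · have hqt : q ≤ q ^ t := Nat.le_self_pow (by omega) q
    have : q ≤ i * q ^ t := le_trans hqt (Nat.le_mul_of_pos_left _ (by omega))
    rcases hextra with h | h <;> omega

lemma sq_mul_dvd {F : Type*} [Field F] [CharP F 2] {n : ℕ} {s R : F[X]}
    (hs : s ∣ X ^ n - 1) (hsR : s * R ∣ X ^ n - 1) : s ^ 2 * R ∣ X ^ (2 * n) - 1 := by
  have h2 : (2:F[X]) = 0 := CharTwo.two_eq_zero
  have h2n : (X:F[X]) ^ (2*n) - 1 = (X ^ n - 1)^2 := by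
    rw [two_mul, pow_add]
    linear_combination ((X:F[X])^n - 1) * h2
  rw [h2n, sq, sq]
  have h3 := mul_dvd_mul hs hsR
  rwa [← mul_assoc] at h3

/-- Core lemma: the minimum distance of the codes of Statement 16 is `6`. -/
lemma minDist_core {F K : Type*} [Field F] [Fintype F] [Field K] [Fintype K] [Algebra F K]
    {q m e n : ℕ} (hq : Fintype.card F = q) (he : q = 2 ^ e) (hq4 : 4 ≤ q) (hm : 2 ≤ m)
    (hK : Fintype.card K = q ^ m) (hn : n = q ^ m - 1)
    {β : K} (hβ : IsPrimitiveRoot β (q ^ m - 1))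
    (g R : F[X])
    (hgR : g = ((X - 1) * minpoly F β) ^ 2 * R)
    (hH2 : (X - 1) * minpoly F β * R ∣ X ^ n - 1)
    (hH3 : ∀ j, 2 ≤ j → j ≤ 4 → aeval (β ^ j) g = 0) :
    minDist (cyclicCode F (2 * n) g) = 6 := by
  classical
  haveI hF2 : CharP F 2 := charP_two_of_card hq he hq4
  haveI hK2c : CharP K 2 := charP_of_injective_algebraMap (algebraMap F K).injective 2
  have hq2 : 2 ≤ q := by omega
  have hB16 : 16 ≤ q ^ m := by
    calc (16:ℕ) = 4 ^ 2 := by norm_num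
    _ ≤ q ^ 2 := Nat.pow_le_pow_left hq4 2
    _ ≤ q ^ m := Nat.pow_le_pow_right (by omega) hm
  have hn15 : 15 ≤ n := by omega
  have hn0 : n ≠ 0 := by omega
  have he0 : e ≠ 0 := by rintro rfl; omega
  have hnodd : ¬ (2 ∣ n) := by
    have h2q : 2 ∣ q := he ▸ dvd_pow_self 2 he0
    have h2qm : 2 ∣ q ^ m := dvd_pow h2q (by omega)
    omega
  have hβn : IsPrimitiveRoot β n := by rw [hn]; exact hβ
  have hβ0 : β ≠ 0 := hβn.ne_zero hn0
  set s : F[X] := (X - 1) * minpoly F β with hs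
  have hint1 : IsIntegral F β := IsIntegral.of_finite F β
  have hm1monic : (minpoly F β).Monic := minpoly.monic hint1
  have hm10 : minpoly F β ≠ 0 := hm1monic.ne_zero
  have hX1 : (X - 1 : F[X]) ≠ 0 := by
    have : (X - C 1 : F[X]) ≠ 0 := Polynomial.X_sub_C_ne_zero 1
    simpa using this
  have hs0 : s ≠ 0 := mul_ne_zero hX1 hm10
  have hXn0 : (X ^ n - 1 : F[X]) ≠ 0 := by
    have : ((X:F[X]) ^ n - C 1) ≠ 0 := (monic_X_pow_sub_C 1 hn0).ne_zero
    simpa using this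
  have hR0 : R ≠ 0 := by
    rintro rfl
    rw [mul_zero] at hH2
    exact hXn0 (zero_dvd_iff.mp hH2)
  have hg0 : g ≠ 0 := by rw [hgR]; exact mul_ne_zero (pow_ne_zero _ hs0) hR0
  have hsdvd : s ∣ X ^ n - 1 := dvd_trans (dvd_mul_right s R) hH2
  have h2n : (X:F[X]) ^ (2*n) - 1 = (X ^ n - 1)^2 := by
    have h2 : (2:F[X]) = 0 := CharTwo.two_eq_zero
    rw [two_mul, pow_add]
    linear_combination ((X:F[X])^n - 1) * h2
  have hgdvd : g ∣ X ^ (2*n) - 1 := by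
    rw [h2n, hgR]
    have h1 : ((X - 1) * minpoly F β) ^ 2 * R = s * (s * R) := by rw [hs]; ring
    have h2 : ((X:F[X]) ^ n - 1)^2 = (X ^ n - 1) * (X ^ n - 1) := sq _
    rw [h1, h2]
    exact mul_dvd_mul hsdvd hH2
  -- evaluation facts
  have hsβ : aeval β s = 0 := by simp [hs, minpoly.aeval]
  have hs1 : aeval (1:K) s = 0 := by simp [hs]
  have hfac : ∀ γ : K, aeval γ s = 0 → aeval γ g = 0 := by
    intro γ hγ
    rw [hgR, map_mul, map_pow, hγ]
    ring
  have hgj : ∀ j, j ≤ 4 → aeval (β ^ j) g = 0 := by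
    intro j hj
    match j, hj with
    | 0, _ => simpa using hfac 1 hs1
    | 1, _ => simpa using hfac β hsβ
    | 2, _ => exact hH3 2 (by omega) (by omega)
    | 3, _ => exact hH3 3 (by omega) (by omega)
    | 4, _ => exact hH3 4 (by omega) (by omega)
  have hg' : derivative g = s ^ 2 * derivative R := by
    rw [hgR, derivative_mul, derivative_pow]
    simp [CharTwo.two_eq_zero]
  have hg'γ : ∀ γ : K, aeval γ s = 0 → aeval γ (derivative g) = 0 := by
    intro γ hγ
    rw [hg', map_mul, map_pow, hγ]
    ring
  -- lower bound
  have hlow : ∀ c : F[X], c ∈ cyclicCode F (2*n) g → c ≠ 0 → 6 ≤ c.support.card := by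
    intro c hcmem hcne
    obtain ⟨hcdeg, hcdvd⟩ := (cyclicCode_mem_iff hgdvd).mp hcmem
    obtain ⟨u, hu⟩ := hcdvd
    have hce : ∀ j, j ≤ 4 → aeval (β ^ j) c = 0 := fun j hj => by
      rw [hu, map_mul, hgj j hj, zero_mul]
    have hcd : ∀ γ : K, aeval γ s = 0 → aeval γ (derivative c) = 0 := by
      intro γ hγ
      rw [hu, derivative_mul, map_add, map_mul, map_mul, hg'γ γ hγ, hfac γ hγ,
        zero_mul, zero_mul, add_zero]
    have hmonX : (X ^ n : F[X]).Monic := monic_X_pow _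
    set c0 := c %ₘ X ^ n with hc0def
    set c1 := c /ₘ X ^ n with hc1def
    have hsplit : c = c0 + X ^ n * c1 := (Polynomial.modByMonic_add_div c (X ^ n)).symm
    have hdc0 : c0.degree < n := by
      have := Polynomial.degree_modByMonic_lt c hmonX
      rwa [Polynomial.degree_X_pow] at this
    have hndc0 : c0.natDegree < n := by
      rcases eq_or_ne c0 0 with h | h
      · rw [h, Polynomial.natDegree_zero]; omega
      · exact (Polynomial.natDegree_lt_iff_degree_lt h).mpr hdc0
    have hndc : c.natDegree < 2 * n := (Polynomial.natDegree_lt_iff_degree_lt hcne).mpr hcdeg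
    have hndc1 : c1.natDegree < n := by
      rw [hc1def, Polynomial.natDegree_divByMonic c hmonX, Polynomial.natDegree_X_pow]
      omega
    have hsupp : c.support.card = c0.support.card + c1.support.card := by
      conv_lhs => rw [hsplit]
      exact support_card_add_X_pow_mul c0 c1
        (fun k hk => lt_of_le_of_lt (Polynomial.le_natDegree_of_mem_supp _ hk) hndc0)
    set cbar := c0 + c1 with hcbar
    have hXnj : ∀ j : ℕ, aeval (β ^ j) ((X:F[X]) ^ n - 1) = 0 := by
      intro j
      rw [map_sub, map_pow, aeval_X, map_one, ← pow_mul, mul_comm j n, pow_mul,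
        hβn.pow_eq_one, one_pow, sub_self]
    have hcbareval : ∀ j, j ≤ 4 → aeval (β ^ j) cbar = 0 := by
      intro j hj
      have h1 : cbar = c - (X ^ n - 1) * c1 := by rw [hcbar, hsplit]; ring
      rw [h1, map_sub, hce j hj, map_mul, hXnj j, zero_mul, sub_zero]
    rcases eq_or_ne cbar 0 with hz | hnz
    · have hc1e : c1 = -c0 := eq_neg_of_add_eq_zero_right hz
      have hcfac : c = (1 - X ^ n) * c0 := by rw [hsplit, hc1e]; ring
      have hc00 : c0 ≠ 0 := by
        intro h00
        rw [h00, mul_zero] at hcfac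
        exact hcne hcfac
      have hc0eval : ∀ j, j ≤ 1 → aeval (β ^ j) c0 = 0 := by
        intro j hj
        have hγs : aeval (β ^ j) s = 0 := by
          match j, hj with
          | 0, _ => simpa using hs1
          | 1, _ => simpa using hsβ
        have hγn : (β ^ j) ^ n = 1 := by
          rw [← pow_mul, mul_comm j n, pow_mul, hβn.pow_eq_one, one_pow]
        have hγ0 : (β ^ j) ≠ 0 := pow_ne_zero _ hβ0
        have hd0 := hcd (β ^ j) hγs
        rw [hcfac, derivative_mul, map_add, map_mul, map_mul] at hd0
        have hv1 : aeval (β ^ j) ((1:F[X]) - X ^ n) = 0 := by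
          rw [map_sub, map_one, map_pow, aeval_X, hγn, sub_self]
        have hder1 : derivative ((1:F[X]) - X ^ n) = -(C (n:F) * X ^ (n-1)) := by
          rw [derivative_sub, derivative_one, derivative_X_pow, zero_sub]
        rw [hder1, hv1, zero_mul, add_zero] at hd0
        have hcoef : aeval (β ^ j) (-(C (n:F) * X ^ (n-1))) ≠ 0 := by
          rw [map_neg, map_mul, aeval_C, map_pow, aeval_X]
          simp only [neg_ne_zero, mul_ne_zero_iff]
          constructor
          · rw [map_natCast]
            exact fun h => hnodd ((CharP.cast_eq_zero_iff K 2 n).mp h)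
          · exact pow_ne_zero _ hγ0
        exact (mul_eq_zero.mp hd0).resolve_left hcoef
      have h3 := bch_bound hβn hc00 hndc0 (r := 1) (fun j hj => hc0eval j hj)
      have hcard1 : c1.support.card = c0.support.card := by
        rw [hc1e, Polynomial.support_neg]
      omega
    · have hndcbar : cbar.natDegree < n := by
        have h1 := Polynomial.natDegree_add_le c0 c1
        have h2 := congrArg Polynomial.natDegree hcbar
        omega
      have h6 := bch_bound hβn hnz hndcbar (r := 4) (fun j hj => hcbareval j hj)
      have hle : cbar.support.card ≤ c0.support.card + c1.support.card :=
        le_trans (Finset.card_le_card (Polynomial.support_add)) (Finset.card_union_le _ _)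
      omega
  -- upper bound: construct a codeword of weight 6
  have hβ1 : β + 1 ≠ 0 := by
    intro h
    have hβe : β = -1 := eq_neg_of_add_eq_zero_left h
    have hβe1 : β = 1 := by rw [hβe, CharTwo.neg_eq]
    exact hβn.pow_ne_one_of_pos_of_lt (l := 1) one_ne_zero (by omega) (by simpa using hβe1)
  obtain ⟨r, hr0, hr1, hrz⟩ : ∃ r : F, r ≠ 0 ∧ r ≠ 1 ∧ algebraMap F K r * (β + 1) ≠ 1 := by
    by_contra hcon
    push_neg at hcon
    have hsub : ({0, 1} : Finset F) ⊆ Finset.univ := Finset.subset_univ _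
    have hcard2 : 2 ≤ (Finset.univ \ ({0, 1} : Finset F)).card := by
      rw [Finset.card_sdiff_of_subset hsub, Finset.card_univ, hq]
      have : ({0, 1} : Finset F).card ≤ 2 := le_trans (Finset.card_insert_le _ _) (by simp)
      omega
    obtain ⟨a, ha, b, hb, hab⟩ := Finset.one_lt_card.mp (lt_of_lt_of_le one_lt_two hcard2)
    simp only [Finset.mem_sdiff, Finset.mem_univ, true_and, Finset.mem_insert,
      Finset.mem_singleton, not_or] at ha hb
    have hae := hcon a ha.1 ha.2
    have hbe := hcon b hb.1 hb.2
    have : algebraMap F K a = algebraMap F K b :=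
      mul_right_cancel₀ hβ1 (hae.trans hbe.symm)
    exact hab ((algebraMap F K).injective this)
  set y : K := algebraMap F K r * (β + 1) + 1 with hy
  have h2K : (2:K) = 0 := CharTwo.two_eq_zero
  have hy0 : y ≠ 0 := by
    intro h
    apply hrz
    have h1 : algebraMap F K r * (β + 1) = -1 := eq_neg_of_add_eq_zero_left h
    rw [h1, CharTwo.neg_eq]
  have hy1 : y ≠ 1 := by
    intro h
    have h1 : algebraMap F K r * (β + 1) = 0 := by rw [hy] at h; linear_combination h
    rcases mul_eq_zero.mp h1 with h2 | h2
    · exact hr0 ((_root_.map_eq_zero (algebraMap F K)).mp h2)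
    · exact hβ1 h2
  have hyβ : y ≠ β := by
    intro h
    have h1 : (algebraMap F K r - 1) * (β + 1) = 0 := by
      rw [hy] at h; linear_combination h - h2K
    rcases mul_eq_zero.mp h1 with h2 | h2
    · apply hr1
      apply (algebraMap F K).injective
      rw [map_one]
      linear_combination h2
    · exact hβ1 h2
  have hord : orderOf β = n := hβn.eq_orderOf.symm
  obtain ⟨co, hcolt, hco⟩ : ∃ co, co < n ∧ β ^ co = y := by
    have hu : IsUnit β := hβn.isUnit (by omega)
    have hβuc : (hu.unit : K) = β := hu.unit_spec
    have hordu : orderOf hu.unit = n := by rw [← orderOf_units, hβuc, hord]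
    have htop : Subgroup.zpowers hu.unit = ⊤ := by
      apply Subgroup.eq_top_of_card_eq
      rw [Nat.card_zpowers, hordu, Nat.card_eq_fintype_card, Fintype.card_units, hK, hn]
    have hmem : Units.mk0 y hy0 ∈ Submonoid.powers hu.unit := by
      rw [mem_powers_iff_mem_zpowers, htop]
      trivial
    obtain ⟨k, hk⟩ := hmem
    refine ⟨k % n, Nat.mod_lt _ (by omega), ?_⟩
    have h1 : hu.unit ^ (k % n) = Units.mk0 y hy0 := by
      rw [← hordu, pow_mod_orderOf]
      exact hk
    have h2 := congrArg (Units.val) h1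
    rw [Units.val_pow_eq_pow_val, hβuc] at h2
    simpa using h2
  have hco0 : co ≠ 0 := by rintro rfl; rw [pow_zero] at hco; exact hy1 hco.symm
  have hco1 : co ≠ 1 := by rintro rfl; rw [pow_one] at hco; exact hyβ hco.symm
  have hα00 : (1 + r : F) ≠ 0 := by
    intro h0
    apply hr1
    have h1 : r = -1 := eq_neg_of_add_eq_zero_right h0
    rw [h1, CharTwo.neg_eq]
  set hpoly : F[X] := C (1 + r) * X ^ 0 + C r * X ^ 1 + C 1 * X ^ co with hhp
  have hsupph : hpoly.support = {0, 1, co} :=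
    Polynomial.support_trinomial (by omega) (by omega) hα00 hr0 one_ne_zero
  have hp0 : hpoly ≠ 0 := by
    intro h0
    have h00 : (0:ℕ) ∈ hpoly.support := by rw [hsupph]; simp
    rw [h0] at h00
    simp at h00
  have h2F : (2:F) = 0 := CharTwo.two_eq_zero
  have heval1F : Polynomial.eval (1:F) hpoly = 0 := by
    rw [hhp]
    simp only [eval_add, eval_mul, eval_C, eval_pow, eval_X, one_pow, mul_one]
    linear_combination (1 + r) * h2F
  have hXdvdh : (X - 1 : F[X]) ∣ hpoly := by
    have : (X - C 1 : F[X]) ∣ hpoly := Polynomial.dvd_iff_isRoot.mpr heval1F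
    simpa using this
  have hevalβ : aeval β hpoly = 0 := by
    rw [hhp]
    simp only [map_add, map_mul, aeval_C, map_pow, aeval_X, pow_zero, pow_one, map_one,
      mul_one, one_mul]
    rw [hco]
    linear_combination (1 + algebraMap F K r + algebraMap F K r * β) * h2K
  have hm1dvdh : minpoly F β ∣ hpoly := minpoly.dvd F β hevalβ
  have hdeg1 : (minpoly F β).natDegree = m := by
    have := minpoly_pow_natDegree hq hq4 hm hK hβ (i := 1) le_rfl (by omega)
    simpa using this
  have hcop : IsCoprime (X - 1 : F[X]) (minpoly F β) := by
    have hXC : (X - 1 : F[X]) = X - C 1 := by simp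
    rw [hXC]
    apply (Polynomial.irreducible_X_sub_C (1:F)).coprime_iff_not_dvd.mpr
    intro hdvd
    have hassoc := (Polynomial.irreducible_X_sub_C (1:F)).associated_of_dvd
      (minpoly.irreducible hint1) hdvd
    have heq := Polynomial.eq_of_monic_of_associated (Polynomial.monic_X_sub_C 1)
      hm1monic hassoc
    have := congrArg Polynomial.natDegree heq
    rw [Polynomial.natDegree_X_sub_C, hdeg1] at this
    omega
  have hsdvdh : s ∣ hpoly := by rw [hs]; exact hcop.mul_dvd hXdvdh hm1dvdh
  obtain ⟨T, hT⟩ := hH2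
  obtain ⟨h0, hh0⟩ := hsdvdh
  set cw : F[X] := (X ^ n - 1) * hpoly with hcw
  have hcw0 : cw ≠ 0 := mul_ne_zero hXn0 hp0
  have hgdvdcw : g ∣ cw := by
    refine ⟨T * h0, ?_⟩
    rw [hcw, hT, hh0, hgR]
    ring
  have hdh : hpoly.natDegree ≤ co := by
    rw [hhp]
    apply le_trans (Polynomial.natDegree_add_le _ _)
    apply max_le
    · apply le_trans (Polynomial.natDegree_add_le _ _)
      apply max_le
      · exact le_trans (Polynomial.natDegree_C_mul_X_pow_le _ _) (by omega)
      · exact le_trans (Polynomial.natDegree_C_mul_X_pow_le _ _) (by omega)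
    · exact le_trans (Polynomial.natDegree_C_mul_X_pow_le _ _) (by omega)
  have hXnn : ((X:F[X]) ^ n - 1).natDegree = n := by
    have := Polynomial.natDegree_X_pow_sub_C (n := n) (r := (1:F))
    simpa using this
  have hdegcw : cw.degree < (2 * n : ℕ) := by
    apply (Polynomial.natDegree_lt_iff_degree_lt hcw0).mp
    have := Polynomial.natDegree_mul_le (p := (X:F[X]) ^ n - 1) (q := hpoly)
    rw [hXnn] at this
    rw [hcw]
    omega
  have hcwmem : cw ∈ cyclicCode F (2*n) g := (cyclicCode_mem_iff hgdvd).mpr ⟨hdegcw, hgdvdcw⟩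
  have hcw6 : cw.support.card = 6 := by
    have hrw : cw = -hpoly + X ^ n * hpoly := by rw [hcw]; ring
    rw [hrw, support_card_add_X_pow_mul _ _ ?side]
    case side =>
      intro k hk
      rw [Polynomial.support_neg, hsupph] at hk
      simp only [Finset.mem_insert, Finset.mem_singleton] at hk
      rcases hk with rfl | rfl | rfl <;> omega
    rw [Polynomial.support_neg, hsupph]
    have hc3 : ({0, 1, co} : Finset ℕ).card = 3 := by
      rw [Finset.card_insert_of_notMem (by simp; omega),
        Finset.card_insert_of_notMem (by simp; omega), Finset.card_singleton]
    omega
  -- conclude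
  have h6mem : 6 ∈ {w | ∃ c ∈ cyclicCode F (2 * n) g, c ≠ 0 ∧ c.support.card = w} :=
    ⟨cw, hcwmem, hcw0, hcw6⟩
  unfold minDist
  apply le_antisymm
  · exact Nat.sInf_le h6mem
  · apply le_csInf ⟨6, h6mem⟩
    rintro w ⟨c, hc, hc0, rfl⟩
    exact hlow c hc hc0

/-- for `q ≥ 4` a power of `2`, `m ≥ 2`, `n = q^m - 1` and `β` a primitive
element of `F_{q^m}`: if `q = 4`, the cyclic code of length `2n` over `F_q` with
generator polynomial `(x-1)^2 m_β(x)^2 m_{β²}(x) m_{β³}(x)` has dimension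
`2(q^m - 1) - 4m - 2` and minimum distance exactly `6`; if `q > 4`, the cyclic code of
length `2n` over `F_q` with generator polynomial `(x-1)^2 m_β(x)^2 m_{β²}(x) m_{β³}(x)
m_{β⁴}(x)` has dimension `2(q^m - 1) - 5m - 2` and minimum distance exactly `6`. -/
theorem statement16 {F K : Type*} [Field F] [Fintype F] [Field K] [Fintype K] [Algebra F K]
    (q : ℕ) (hq : Fintype.card F = q) (hq2 : ∃ e : ℕ, q = 2 ^ e) (hq4 : 4 ≤ q)
    (m : ℕ) (hm : 2 ≤ m) (hK : Fintype.card K = q ^ m)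
    (n : ℕ) (hn : n = q ^ m - 1)
    (β : K) (hβ : IsPrimitiveRoot β (q ^ m - 1)) :
    (q = 4 →
      Module.finrank F
          (cyclicCode F (2 * n)
            ((X - 1) ^ 2 * (minpoly F β) ^ 2 * minpoly F (β ^ 2) * minpoly F (β ^ 3))) =
        2 * (q ^ m - 1) - 4 * m - 2 ∧
      minDist (cyclicCode F (2 * n)
          ((X - 1) ^ 2 * (minpoly F β) ^ 2 * minpoly F (β ^ 2) * minpoly F (β ^ 3))) = 6) ∧
    (4 < q →
      Module.finrank F
          (cyclicCode F (2 * n)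
            ((X - 1) ^ 2 * (minpoly F β) ^ 2 * minpoly F (β ^ 2) * minpoly F (β ^ 3) *
              minpoly F (β ^ 4))) =
        2 * (q ^ m - 1) - 5 * m - 2 ∧
      minDist (cyclicCode F (2 * n)
          ((X - 1) ^ 2 * (minpoly F β) ^ 2 * minpoly F (β ^ 2) * minpoly F (β ^ 3) *
            minpoly F (β ^ 4))) = 6) := by
  classical
  obtain ⟨e, he⟩ := hq2
  haveI hF2 : CharP F 2 := charP_two_of_card hq he hq4
  haveI hK2c : CharP K 2 := charP_of_injective_algebraMap (algebraMap F K).injective 2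
  have hq2' : 2 ≤ q := by omega
  have hB16 : 16 ≤ q ^ m := by
    calc (16:ℕ) = 4 ^ 2 := by norm_num
    _ ≤ q ^ 2 := Nat.pow_le_pow_left hq4 2
    _ ≤ q ^ m := Nat.pow_le_pow_right (by omega) hm
  have hn15 : 15 ≤ n := by omega
  have hβn : IsPrimitiveRoot β n := by rw [hn]; exact hβ
  have hint : ∀ i : ℕ, IsIntegral F (β ^ i) := fun i => IsIntegral.of_finite F _
  have hm1e : minpoly F β = minpoly F (β ^ 1) := by rw [pow_one]
  have hX1ne : (X - 1 : F[X]) ≠ 0 := by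
    have h := Polynomial.X_sub_C_ne_zero (R := F) 1
    simpa using h
  have hmne : ∀ i : ℕ, minpoly F (β ^ i) ≠ 0 := fun i => minpoly.ne_zero (hint i)
  have hm1ne : minpoly F β ≠ 0 := by rw [hm1e]; exact hmne 1
  have hdegm : ∀ i : ℕ, 1 ≤ i → i ≤ 4 → (minpoly F (β ^ i)).natDegree = m :=
    fun i h1 h4 => minpoly_pow_natDegree hq hq4 hm hK hβ h1 h4
  have hdvdm : ∀ i : ℕ, minpoly F (β ^ i) ∣ X ^ n - 1 := by
    intro i
    apply minpoly.dvd
    rw [map_sub, map_pow, aeval_X, map_one, ← pow_mul, mul_comm i n, pow_mul,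
      hβn.pow_eq_one, one_pow, sub_self]
  have hXdvd : (X - 1 : F[X]) ∣ X ^ n - 1 := by
    have h1 : (X - C 1 : F[X]) ∣ X ^ n - 1 :=
      Polynomial.dvd_iff_isRoot.mpr (by simp [Polynomial.IsRoot])
    simpa using h1
  have hXd1 : (X - 1 : F[X]).natDegree = 1 := by
    simpa using Polynomial.natDegree_X_sub_C (1:F)
  have hcopir : ∀ p p' : F[X], Irreducible p → Irreducible p' → p.Monic → p'.Monic →
      p ≠ p' → IsCoprime p p' := by
    intro p p' hp hp' hmp hmp' hnep
    apply hp.coprime_iff_not_dvd.mpr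
    intro hdvd
    exact hnep (Polynomial.eq_of_monic_of_associated hmp hmp' (hp.associated_of_dvd hp' hdvd))
  have hirrX : Irreducible (X - 1 : F[X]) := by
    have h := Polynomial.irreducible_X_sub_C (1:F)
    simpa using h
  have hmonX : (X - 1 : F[X]).Monic := by
    have h := Polynomial.monic_X_sub_C (1:F)
    simpa using h
  have hcopX : ∀ i : ℕ, 1 ≤ i → i ≤ 4 → IsCoprime (X - 1 : F[X]) (minpoly F (β ^ i)) := by
    intro i h1 h4
    apply hcopir _ _ hirrX (minpoly.irreducible (hint i)) hmonX (minpoly.monic (hint i))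
    intro hEq
    have h2 := congrArg Polynomial.natDegree hEq
    rw [hXd1, hdegm i h1 h4] at h2
    omega
  have hcopm : ∀ i j : ℕ, 1 ≤ i → i < j → j ≤ 4 → (4 < q ∨ j ≤ 3) →
      IsCoprime (minpoly F (β ^ i)) (minpoly F (β ^ j)) :=
    fun i j h1 h2 h3 h4 => hcopir _ _ (minpoly.irreducible (hint i))
      (minpoly.irreducible (hint j)) (minpoly.monic (hint i)) (minpoly.monic (hint j))
      (minpoly_pow_ne hq he hq4 hm hK hβ h1 h2 h3 h4)
  have d12 : (X - 1) * minpoly F (β ^ 1) ∣ X ^ n - 1 :=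
    (hcopX 1 le_rfl (by omega)).mul_dvd hXdvd (hdvdm 1)
  have hsdvd : (X - 1) * minpoly F β ∣ X ^ n - 1 := by rw [hm1e]; exact d12
  constructor
  · -- q = 4
    intro h4
    have hextra : ∀ j : ℕ, j ≤ 3 → (4 < q ∨ j ≤ 3) := fun j hj => Or.inr hj
    have c123 : IsCoprime ((X - 1) * minpoly F (β ^ 1)) (minpoly F (β ^ 2)) :=
      IsCoprime.mul_left (hcopX 2 (by omega) (by omega))
        (hcopm 1 2 le_rfl (by omega) (by omega) (hextra 2 (by omega)))
    have d123 : (X - 1) * minpoly F (β ^ 1) * minpoly F (β ^ 2) ∣ X ^ n - 1 :=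
      c123.mul_dvd d12 (hdvdm 2)
    have c1234 : IsCoprime ((X - 1) * minpoly F (β ^ 1) * minpoly F (β ^ 2))
        (minpoly F (β ^ 3)) :=
      IsCoprime.mul_left (IsCoprime.mul_left (hcopX 3 (by omega) (by omega))
        (hcopm 1 3 le_rfl (by omega) (by omega) (hextra 3 (by omega))))
        (hcopm 2 3 (by omega) (by omega) (by omega) (hextra 3 (by omega)))
    have d1234 : (X - 1) * minpoly F (β ^ 1) * minpoly F (β ^ 2) * minpoly F (β ^ 3) ∣
        X ^ n - 1 := c1234.mul_dvd d123 (hdvdm 3)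
    have hH2 : (X - 1) * minpoly F β * (minpoly F (β ^ 2) * minpoly F (β ^ 3)) ∣
        X ^ n - 1 := by
      rw [hm1e, show (X - 1) * minpoly F (β ^ 1) * (minpoly F (β ^ 2) * minpoly F (β ^ 3))
        = (X - 1) * minpoly F (β ^ 1) * minpoly F (β ^ 2) * minpoly F (β ^ 3) from by ring]
      exact d1234
    set g : F[X] := (X - 1) ^ 2 * (minpoly F β) ^ 2 * minpoly F (β ^ 2) * minpoly F (β ^ 3)
      with hgdef
    have hgR : g = ((X - 1) * minpoly F β) ^ 2 *
        (minpoly F (β ^ 2) * minpoly F (β ^ 3)) := by rw [hgdef]; ring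
    have hgdvd : g ∣ X ^ (2 * n) - 1 := by
      rw [hgR]
      exact sq_mul_dvd hsdvd hH2
    have hH3 : ∀ j, 2 ≤ j → j ≤ 4 → aeval (β ^ j) g = 0 := by
      intro j hj2 hj4
      match j, hj2, hj4 with
      | 2, _, _ => rw [hgdef]; simp [map_mul, minpoly.aeval]
      | 3, _, _ => rw [hgdef]; simp [map_mul, minpoly.aeval]
      | 4, _, _ =>
          have h44 : aeval (β ^ 4) (minpoly F β) = 0 := by
            have h0 := aeval_pow_card_eq_zero (hq.trans he) (minpoly F β) β (minpoly.aeval F β)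
            rwa [hq, h4] at h0
          rw [hgdef]
          simp [map_mul, map_pow, h44]
    have hmd := minDist_core hq he hq4 hm hK hn hβ g
      (minpoly F (β ^ 2) * minpoly F (β ^ 3)) hgR hH2 hH3
    have hg0 : g ≠ 0 := by
      rw [hgdef]
      exact mul_ne_zero (mul_ne_zero (mul_ne_zero (pow_ne_zero _ hX1ne)
        (pow_ne_zero _ hm1ne)) (hmne 2)) (hmne 3)
    have hdg : g.natDegree = 4 * m + 2 := by
      rw [hgdef,
        Polynomial.natDegree_mul (mul_ne_zero (mul_ne_zero (pow_ne_zero _ hX1ne)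
          (pow_ne_zero _ hm1ne)) (hmne 2)) (hmne 3),
        Polynomial.natDegree_mul (mul_ne_zero (pow_ne_zero _ hX1ne)
          (pow_ne_zero _ hm1ne)) (hmne 2),
        Polynomial.natDegree_mul (pow_ne_zero _ hX1ne) (pow_ne_zero _ hm1ne),
        Polynomial.natDegree_pow, Polynomial.natDegree_pow, hXd1]
      have e1 : (minpoly F β).natDegree = m := by rw [hm1e]; exact hdegm 1 le_rfl (by omega)
      have e2 := hdegm 2 (by omega) (by omega)
      have e3 := hdegm 3 (by omega) (by omega)
      rw [e1, e2, e3]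
      omega
    refine ⟨?_, hmd⟩
    rw [finrank_cyclicCode hg0 hgdvd, hdg, hn]
    omega
  · -- q > 4
    intro h5
    have hextra : ∀ j : ℕ, (4 < q ∨ j ≤ 3) := fun j => Or.inl h5
    have c123 : IsCoprime ((X - 1) * minpoly F (β ^ 1)) (minpoly F (β ^ 2)) :=
      IsCoprime.mul_left (hcopX 2 (by omega) (by omega))
        (hcopm 1 2 le_rfl (by omega) (by omega) (hextra 2))
    have d123 : (X - 1) * minpoly F (β ^ 1) * minpoly F (β ^ 2) ∣ X ^ n - 1 :=
      c123.mul_dvd d12 (hdvdm 2)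
    have c1234 : IsCoprime ((X - 1) * minpoly F (β ^ 1) * minpoly F (β ^ 2))
        (minpoly F (β ^ 3)) :=
      IsCoprime.mul_left (IsCoprime.mul_left (hcopX 3 (by omega) (by omega))
        (hcopm 1 3 le_rfl (by omega) (by omega) (hextra 3)))
        (hcopm 2 3 (by omega) (by omega) (by omega) (hextra 3))
    have d1234 : (X - 1) * minpoly F (β ^ 1) * minpoly F (β ^ 2) * minpoly F (β ^ 3) ∣
        X ^ n - 1 := c1234.mul_dvd d123 (hdvdm 3)
    have c12345 : IsCoprime ((X - 1) * minpoly F (β ^ 1) * minpoly F (β ^ 2) *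
        minpoly F (β ^ 3)) (minpoly F (β ^ 4)) :=
      IsCoprime.mul_left (IsCoprime.mul_left (IsCoprime.mul_left
        (hcopX 4 (by omega) (by omega))
        (hcopm 1 4 le_rfl (by omega) (by omega) (hextra 4)))
        (hcopm 2 4 (by omega) (by omega) (by omega) (hextra 4)))
        (hcopm 3 4 (by omega) (by omega) (by omega) (hextra 4))
    have d12345 : (X - 1) * minpoly F (β ^ 1) * minpoly F (β ^ 2) * minpoly F (β ^ 3) *
        minpoly F (β ^ 4) ∣ X ^ n - 1 := c12345.mul_dvd d1234 (hdvdm 4)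
    have hH2 : (X - 1) * minpoly F β * (minpoly F (β ^ 2) * minpoly F (β ^ 3) *
        minpoly F (β ^ 4)) ∣ X ^ n - 1 := by
      rw [hm1e, show (X - 1) * minpoly F (β ^ 1) * (minpoly F (β ^ 2) * minpoly F (β ^ 3) *
        minpoly F (β ^ 4)) = (X - 1) * minpoly F (β ^ 1) * minpoly F (β ^ 2) *
        minpoly F (β ^ 3) * minpoly F (β ^ 4) from by ring]
      exact d12345
    set g : F[X] := (X - 1) ^ 2 * (minpoly F β) ^ 2 * minpoly F (β ^ 2) * minpoly F (β ^ 3) *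
      minpoly F (β ^ 4) with hgdef
    have hgR : g = ((X - 1) * minpoly F β) ^ 2 *
        (minpoly F (β ^ 2) * minpoly F (β ^ 3) * minpoly F (β ^ 4)) := by rw [hgdef]; ring
    have hgdvd : g ∣ X ^ (2 * n) - 1 := by
      rw [hgR]
      exact sq_mul_dvd hsdvd hH2
    have hH3 : ∀ j, 2 ≤ j → j ≤ 4 → aeval (β ^ j) g = 0 := by
      intro j hj2 hj4
      match j, hj2, hj4 with
      | 2, _, _ => rw [hgdef]; simp [map_mul, minpoly.aeval]
      | 3, _, _ => rw [hgdef]; simp [map_mul, minpoly.aeval]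
      | 4, _, _ => rw [hgdef]; simp [map_mul, minpoly.aeval]
    have hmd := minDist_core hq he hq4 hm hK hn hβ g
      (minpoly F (β ^ 2) * minpoly F (β ^ 3) * minpoly F (β ^ 4)) hgR hH2 hH3
    have hg0 : g ≠ 0 := by
      rw [hgdef]
      exact mul_ne_zero (mul_ne_zero (mul_ne_zero (mul_ne_zero (pow_ne_zero _ hX1ne)
        (pow_ne_zero _ hm1ne)) (hmne 2)) (hmne 3)) (hmne 4)
    have hdg : g.natDegree = 5 * m + 2 := by
      rw [hgdef,
        Polynomial.natDegree_mul (mul_ne_zero (mul_ne_zero (mul_ne_zero (pow_ne_zero _ hX1ne)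
          (pow_ne_zero _ hm1ne)) (hmne 2)) (hmne 3)) (hmne 4),
        Polynomial.natDegree_mul (mul_ne_zero (mul_ne_zero (pow_ne_zero _ hX1ne)
          (pow_ne_zero _ hm1ne)) (hmne 2)) (hmne 3),
        Polynomial.natDegree_mul (mul_ne_zero (pow_ne_zero _ hX1ne)
          (pow_ne_zero _ hm1ne)) (hmne 2),
        Polynomial.natDegree_mul (pow_ne_zero _ hX1ne) (pow_ne_zero _ hm1ne),
        Polynomial.natDegree_pow, Polynomial.natDegree_pow, hXd1]
      have e1 : (minpoly F β).natDegree = m := by rw [hm1e]; exact hdegm 1 le_rfl (by omega)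
      have e2 := hdegm 2 (by omega) (by omega)
      have e3 := hdegm 3 (by omega) (by omega)
      have e4 := hdegm 4 (by omega) (by omega)
      rw [e1, e2, e3, e4]
      omega
    refine ⟨?_, hmd⟩
    rw [finrank_cyclicCode hg0 hgdvd, hdg, hn]
    omega
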